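/- arXiv:1409.2166 — 2 statements merged into one kernel-verified Lean document; each statement's English description precedes it below -/
import Mathlib

section
/- Let λ > λ*, where λ* = (√2+1)·e^{√2}. Then ζ_λ has exactly one nonzero real fixed point, and this fixed point lies in the open interval (√2, ∞). -/
/-- The real function `ζ_λ(x) = λ·x·e^{−x}/(x+1)`. -/
noncomputable def zeta (lam x : ℝ) : ℝ := lam * x * Real.exp (-x) / (x + 1)

/-!
Dividing by `x` and multiplying by `(x + 1) e^x`, a point `x ∉ {0, -1}` is a fixed point of `ζ_λ`
exactly when `(x + 1) e^x = λ`. The left side is positive only for `x > -1`, where it is strictly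
increasing and unbounded; at `x = √2` it equals `λ*`, so for `λ > λ*` it takes the value `λ` once,
at a point to the right of `√2`.
-/

open Real Set

noncomputable def oneAddMulExp (x : ℝ) : ℝ := (x + 1) * exp x

lemma continuous_oneAddMulExp : Continuous oneAddMulExp := by
  unfold oneAddMulExp
  fun_prop

lemma hasDerivAt_oneAddMulExp (x : ℝ) : HasDerivAt oneAddMulExp ((x + 2) * exp x) x := by
  rw [show (x + 2) * exp x = 1 * exp x + (x + 1) * exp x by ring]
  exact ((hasDerivAt_id' x).add_const 1).mul (hasDerivAt_exp x)

lemma strictMonoOn_oneAddMulExp : StrictMonoOn oneAddMulExp (Ici (-1)) := by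
  refine strictMonoOn_of_deriv_pos (convex_Ici _) continuous_oneAddMulExp.continuousOn ?_
  intro x hx
  rw [interior_Ici, mem_Ioi] at hx
  rw [(hasDerivAt_oneAddMulExp x).deriv]
  have : 0 < x + 2 := by linarith
  positivity

lemma neg_one_lt_of_oneAddMulExp_pos {x : ℝ} (h : 0 < oneAddMulExp x) : -1 < x := by
  have := pos_of_mul_pos_left h (exp_pos x).le
  linarith

lemma lt_oneAddMulExp {x : ℝ} (hx : -1 ≤ x) : x < oneAddMulExp x := by
  have hx' : 0 ≤ x + 1 := by linarith
  have := mul_le_mul_of_nonneg_left (add_one_le_exp x) hx'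
  unfold oneAddMulExp
  nlinarith

lemma exists_oneAddMulExp_eq_of_lt {a lam : ℝ} (ha : -1 ≤ a) (h : oneAddMulExp a < lam) :
    ∃ b, a < b ∧ oneAddMulExp b = lam := by
  have ha_lt : a < lam := (lt_oneAddMulExp ha).trans h
  have hlam_le : lam ≤ oneAddMulExp lam := (lt_oneAddMulExp (by linarith)).le
  obtain ⟨b, hb, hgb⟩ := intermediate_value_Ioc ha_lt.le continuous_oneAddMulExp.continuousOn
    ⟨h, hlam_le⟩
  exact ⟨b, hb.1, hgb⟩

lemma zeta_eq_self_iff {lam x : ℝ} (hx0 : x ≠ 0) (hx1 : x ≠ -1) :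
    zeta lam x = x ↔ oneAddMulExp x = lam := by
  have hx1' : x + 1 ≠ 0 := fun h => hx1 (by linarith)
  rw [zeta, oneAddMulExp, div_eq_iff hx1', exp_neg]
  constructor
  · intro h
    field_simp at h
    rw [h]
    ring
  · intro h
    rw [← h]
    field_simp

theorem unique_nonzero_fixed_point_of_lamStar_lt (lam : ℝ)
    (hlam : (Real.sqrt 2 + 1) * Real.exp (Real.sqrt 2) < lam) :
    ∃ b : ℝ, b ∈ Set.Ioi (Real.sqrt 2) ∧ zeta lam b = b ∧
      ∀ x : ℝ, x ≠ 0 → x ≠ -1 → zeta lam x = x → x = b := by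
  have hsqrt2 : 0 < √2 := by positivity
  obtain ⟨b, hb, hgb⟩ := exists_oneAddMulExp_eq_of_lt (by linarith) hlam
  have hlam_pos : 0 < lam := hgb ▸ (hsqrt2.trans hb).trans (lt_oneAddMulExp (by linarith))
  refine ⟨b, hb, (zeta_eq_self_iff (by linarith) (by linarith)).2 hgb, ?_⟩
  intro x hx0 hx1 hfix
  have hgx := (zeta_eq_self_iff hx0 hx1).1 hfix
  have hx : -1 < x := neg_one_lt_of_oneAddMulExp_pos (hgx ▸ hlam_pos)
  exact strictMonoOn_oneAddMulExp.injOn (mem_Ici.2 hx.le) (mem_Ici.2 (by linarith))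
    (hgx.trans hgb.symm)
end

section
/- Let λ > 0 and let x_f be a nonzero real fixed point of ζ_λ lying in (−1, 0) ∪ (√2, ∞). Then |ζ_λ'(x_f)| > 1, i.e. x_f is a repelling fixed point. -/
/-!
At a nonzero fixed point the equation `ζ_λ(x) = x` reads `λ e^{-x} = x + 1`, which eliminates `λ`
from the derivative: `ζ_λ'(x) = (1 - x - x²)/(x + 1)`. Writing `g` for this rational function,
`g² - 1 = x (x + 2) (x² - 2)/(x + 1)²`, which is positive exactly on `(-2, -√2) ∪ (-1, 0) ∪ (√2, ∞)`.
-/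

theorem hasDerivAt_zeta (lam : ℝ) {x : ℝ} (hx : x + 1 ≠ 0) :
    HasDerivAt (zeta lam) (lam * Real.exp (-x) * (1 - x - x ^ 2) / (x + 1) ^ 2) x := by
  have hexp : HasDerivAt (fun y ↦ Real.exp (-y)) (-Real.exp (-x)) x := by
    simpa using (hasDerivAt_neg x).exp
  have hnum : HasDerivAt (fun y ↦ lam * y * Real.exp (-y))
      (lam * Real.exp (-x) - lam * x * Real.exp (-x)) x := by
    simpa [sub_eq_add_neg] using ((hasDerivAt_id x).const_mul lam).fun_mul hexp
  exact (hnum.fun_div ((hasDerivAt_id' x).add_const 1) hx).congr_deriv (by ring)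

theorem mul_exp_neg_eq_of_zeta_eq_self {lam x : ℝ} (hx0 : x ≠ 0) (hx1 : x + 1 ≠ 0)
    (hfix : zeta lam x = x) : lam * Real.exp (-x) = x + 1 := by
  rw [zeta, div_eq_iff hx1] at hfix
  exact mul_left_cancel₀ hx0 (by linear_combination hfix)

theorem deriv_zeta_of_zeta_eq_self {lam x : ℝ} (hx0 : x ≠ 0) (hx1 : x + 1 ≠ 0)
    (hfix : zeta lam x = x) : deriv (zeta lam) x = (1 - x - x ^ 2) / (x + 1) := by
  rw [(hasDerivAt_zeta lam hx1).deriv, mul_exp_neg_eq_of_zeta_eq_self hx0 hx1 hfix]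
  field_simp

theorem one_lt_abs_div_iff {x : ℝ} (hx : x + 1 ≠ 0) :
    1 < |(1 - x - x ^ 2) / (x + 1)| ↔ 0 < x * (x + 2) * (x ^ 2 - 2) := by
  have hsq : 0 < (x + 1) ^ 2 := by positivity
  have key : ((1 - x - x ^ 2) / (x + 1)) ^ 2 - 1 = x * (x + 2) * (x ^ 2 - 2) / (x + 1) ^ 2 := by
    field_simp
    ring
  rw [← one_lt_sq_iff_one_lt_abs, ← sub_pos, key, div_pos_iff_of_pos_right hsq]

theorem repelling_fixed_point_general (lam : ℝ) (xf : ℝ)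
    (hxf : xf ∈ Set.Ioo (-1 : ℝ) 0 ∪ Set.Ioi (Real.sqrt 2)) (hfix : zeta lam xf = xf) :
    1 < |deriv (zeta lam) xf| := by
  rcases hxf with ⟨hlo, hhi⟩ | hbig
  · rw [deriv_zeta_of_zeta_eq_self hhi.ne (by linarith) hfix, one_lt_abs_div_iff (by linarith)]
    have hsq : xf ^ 2 < 2 := by nlinarith
    exact mul_pos_of_neg_of_neg (mul_neg_of_neg_of_pos hhi (by linarith)) (by linarith)
  · rw [Set.mem_Ioi] at hbig
    have hsqrt2 := Real.one_lt_sqrt_two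
    rw [deriv_zeta_of_zeta_eq_self (by linarith) (by linarith) hfix,
      one_lt_abs_div_iff (by linarith)]
    have hsq : 2 < xf ^ 2 := by nlinarith [Real.sq_sqrt (zero_le_two : (0 : ℝ) ≤ 2)]
    exact mul_pos (mul_pos (by linarith) (by linarith)) (by linarith)

theorem repelling_fixed_point (lam : ℝ) (hlam : 0 < lam) (xf : ℝ)
    (hxf : xf ∈ Set.Ioo (-1 : ℝ) 0 ∪ Set.Ioi (Real.sqrt 2)) (hfix : zeta lam xf = xf) :
    1 < |deriv (zeta lam) xf| :=
  repelling_fixed_point_general lam xf hxf hfix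
end
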